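/- Every maximal isotropic subgroup of a finite symplectic ℤ-module has order equal to the square root of the order of the module: let G be a finite abelian group equipped with a symplectic form ω, and let H ≤ G be a maximal isotropic subgroup. Then H equals its own orthogonal complement H^⊥ = {g ∈ G : ω(g,h) = 0 for all h ∈ H}, and |H|² = |G|. -/

import Mathlib

/-!
If `g` is orthogonal to `H` then `H + ℤg` is still isotropic (as `ω g g = 0`), so maximality gives
`H^⊥ = H`. Pairing with `ω` then embeds `G ⧸ H` (kernel `H^⊥ = H`) into the ℚ/ℤ-valued characters
of `H`, and `H` (isotropy and nondegeneracy) into those of `G ⧸ H`. A finite abelian group has at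
most as many such characters as elements, because `ℚ/ℤ` embeds into `ℂˣ` via `q ↦ exp (2πiq)`.
Hence `|G ⧸ H| = |H|`.
-/

/-- A symplectic form on a finite abelian group, valued in ℚ/ℤ :
ℤ-bilinear, alternating and nondegenerate. -/
structure IsSymplecticForm {G : Type*} [AddCommGroup G]
    (ω : G → G → AddCircle (1 : ℚ)) : Prop where
  add_left : ∀ x x' y : G, ω (x + x') y = ω x y + ω x' y
  add_right : ∀ x y y' : G, ω x (y + y') = ω x y + ω x y'
  alternating : ∀ x : G, ω x x = 0
  nondeg : ∀ x : G, (∀ y : G, ω x y = 0) → x = 0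

/-- A subgroup is isotropic for `ω` if `ω` vanishes identically on it. -/
def IsIsotropic {G : Type*} [AddCommGroup G]
    (ω : G → G → AddCircle (1 : ℚ)) (H : AddSubgroup G) : Prop :=
  ∀ x ∈ H, ∀ y ∈ H, ω x y = 0

/-- A maximal isotropic subgroup: isotropic and not properly contained in any
isotropic subgroup. -/
def IsMaximalIsotropic {G : Type*} [AddCommGroup G]
    (ω : G → G → AddCircle (1 : ℚ)) (H : AddSubgroup G) : Prop :=
  IsIsotropic ω H ∧ ∀ K : AddSubgroup G, IsIsotropic ω K → H ≤ K → K = H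

namespace AddCircle

noncomputable def ratToReal : AddCircle (1 : ℚ) →+ AddCircle (1 : ℝ) :=
  QuotientAddGroup.map _ _ (Rat.castHom ℝ).toAddMonoidHom <| by
    rintro _ ⟨n, rfl⟩
    exact ⟨n, by simp⟩

lemma ratToReal_injective : Function.Injective ratToReal := by
  refine (injective_iff_map_eq_zero _).2 fun x hx => ?_
  induction x using QuotientAddGroup.induction_on with | H q => ?_
  obtain ⟨n, hn⟩ := (coe_eq_zero_iff (p := (1 : ℝ))).1 hx
  have hn' : ((n : ℚ) : ℝ) = q := by simpa using hn
  exact (coe_eq_zero_iff (p := (1 : ℚ))).2 ⟨n, by simpa using Rat.cast_injective hn'⟩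

noncomputable def ratToComplex : AddChar (AddCircle (1 : ℚ)) ℂ :=
  Circle.coeHom.compAddChar (toCircle_addChar.compAddMonoidHom ratToReal)

lemma ratToComplex_injective : Function.Injective ratToComplex :=
  Subtype.coe_injective.comp <| (injective_toCircle one_ne_zero).comp ratToReal_injective

end AddCircle

namespace CharacterModule

variable {A : Type*} [AddCommGroup A]

lemma toAddChar_injective :
    Function.Injective fun c : CharacterModule A => AddCircle.ratToComplex.compAddMonoidHom c :=
  fun _ _ h => DFunLike.ext _ _ fun a => AddCircle.ratToComplex_injective (DFunLike.congr_fun h a)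

instance [Finite A] : Finite (CharacterModule A) := Finite.of_injective _ toAddChar_injective

lemma card_le [Finite A] : Nat.card (CharacterModule A) ≤ Nat.card A := by
  cases nonempty_fintype A
  calc Nat.card (CharacterModule A) ≤ Nat.card (AddChar A ℂ) :=
        Nat.card_le_card_of_injective _ toAddChar_injective
    _ = Nat.card A := by simp only [Nat.card_eq_fintype_card, AddChar.card_eq]

end CharacterModule

lemma card_le_card_of_injective_characterModule {A B : Type*} [AddCommGroup B] [Finite B]
    {f : A → CharacterModule B} (hf : Function.Injective f) : Nat.card A ≤ Nat.card B :=
  (Nat.card_le_card_of_injective f hf).trans CharacterModule.card_le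

namespace IsSymplecticForm

variable {G : Type*} [AddCommGroup G] {ω : G → G → AddCircle (1 : ℚ)}

def toHom (hω : IsSymplecticForm ω) : G →+ G →+ AddCircle (1 : ℚ) :=
  AddMonoidHom.mk' (fun x => AddMonoidHom.mk' (ω x) (hω.add_right x))
    fun x x' => AddMonoidHom.ext (hω.add_left x x')

@[simp] lemma toHom_apply (hω : IsSymplecticForm ω) (x y : G) : hω.toHom x y = ω x y := rfl

lemma apply_swap (hω : IsSymplecticForm ω) (x y : G) : ω y x = -ω x y := by
  have h := hω.alternating (x + y)
  rw [hω.add_left, hω.add_right, hω.add_right, hω.alternating, hω.alternating, zero_add,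
    add_zero] at h
  exact eq_neg_of_add_eq_zero_right h

end IsSymplecticForm

section Isotropic

variable {G : Type*} [AddCommGroup G] {ω : G → G → AddCircle (1 : ℚ)} {H : AddSubgroup G}

lemma IsIsotropic.sup_zmultiples (hω : IsSymplecticForm ω) (hH : IsIsotropic ω H) {g : G}
    (hg : ∀ h ∈ H, ω g h = 0) : IsIsotropic ω (H ⊔ AddSubgroup.zmultiples g) := by
  have hg' : ∀ h ∈ H, ω h g = 0 := fun h hh => by rw [hω.apply_swap, hg h hh, neg_zero]
  rintro _ hx _ hy
  obtain ⟨h₁, hh₁, _, ⟨m, rfl⟩, rfl⟩ := AddSubgroup.mem_sup.1 hx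
  obtain ⟨h₂, hh₂, _, ⟨n, rfl⟩, rfl⟩ := AddSubgroup.mem_sup.1 hy
  rw [← hω.toHom_apply]
  simp only [map_add, map_zsmul, AddMonoidHom.add_apply, AddMonoidHom.smul_apply,
    hω.toHom_apply, hH h₁ hh₁ h₂ hh₂, hg' h₁ hh₁, hg h₂ hh₂, hω.alternating, smul_zero, add_zero]

lemma IsMaximalIsotropic.orthogonal_eq_self (hω : IsSymplecticForm ω)
    (hH : IsMaximalIsotropic ω H) : {g : G | ∀ h ∈ H, ω g h = 0} = (H : Set G) := by
  refine Set.Subset.antisymm (fun g hg => ?_) fun g hg h hh => hH.1 g hg h hh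
  rw [SetLike.mem_coe, ← hH.2 _ (hH.1.sup_zmultiples hω hg) le_sup_left]
  exact AddSubgroup.mem_sup_right (AddSubgroup.mem_zmultiples g)

variable [Finite G]

lemma IsMaximalIsotropic.card_quotient_le (hω : IsSymplecticForm ω)
    (hH : IsMaximalIsotropic ω H) : Nat.card (G ⧸ H) ≤ Nat.card H := by
  let f : G ⧸ H →+ CharacterModule H := QuotientAddGroup.lift H
    (hω.toHom.flip.comp H.subtype).flip fun x hx => AddMonoidHom.ext fun h => hH.1 x hx h h.2
  refine card_le_card_of_injective_characterModule (f := f) <|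
    (injective_iff_map_eq_zero f).2 fun x hx => ?_
  induction x using QuotientAddGroup.induction_on with | H g => ?_
  have hg : g ∈ {g : G | ∀ h ∈ H, ω g h = 0} := fun h hh => DFunLike.congr_fun hx ⟨h, hh⟩
  rw [hH.orthogonal_eq_self hω] at hg
  exact (QuotientAddGroup.eq_zero_iff g).2 hg

lemma IsIsotropic.card_le_card_quotient (hω : IsSymplecticForm ω) (hH : IsIsotropic ω H) :
    Nat.card H ≤ Nat.card (G ⧸ H) := by
  let f : H → CharacterModule (G ⧸ H) := fun h =>
    QuotientAddGroup.lift H (hω.toHom h) fun x hx => hH h h.2 x hx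
  refine card_le_card_of_injective_characterModule (f := f) fun a b hab => ?_
  have hab' : ∀ y : G, ω a y = ω b y := fun y => DFunLike.congr_fun hab (y : G ⧸ H)
  refine Subtype.ext <| sub_eq_zero.1 <| hω.nondeg _ fun y => ?_
  rw [← hω.toHom_apply, map_sub, AddMonoidHom.sub_apply, hω.toHom_apply, hω.toHom_apply, hab' y,
    sub_self]

end Isotropic

/-- A maximal isotropic subgroup of a finite symplectic ℤ-module equals its own
orthogonal complement, and its order is the square root of the order of the module. -/
theorem maximal_isotropic_card_sq_eq_card
    {G : Type*} [AddCommGroup G] [Fintype G]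
    (ω : G → G → AddCircle (1 : ℚ)) (hω : IsSymplecticForm ω)
    (H : AddSubgroup G) (hH : IsMaximalIsotropic ω H) :
    {g : G | ∀ h ∈ H, ω g h = 0} = (H : Set G) ∧
    Nat.card H ^ 2 = Nat.card G := by
  refine ⟨hH.orthogonal_eq_self hω, ?_⟩
  have hcard : Nat.card (G ⧸ H) = Nat.card H :=
    le_antisymm (hH.card_quotient_le hω) (hH.1.card_le_card_quotient hω)
  rw [AddSubgroup.card_eq_card_quotient_mul_card_addSubgroup H, hcard, sq]
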